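/- arXiv:1404.7175 — 8 statements merged into one kernel-verified Lean document; each statement's English description precedes it below -/
import Mathlib

section
/- Let f, f1, f0 ∈ [0,1] and r1*, r0*, r1, r0 ∈ (0,1] with f = pe·f1 + (1−pe)·f0 for some pe ∈ [0,1]. Suppose the null condition r1*·f + r0*·(1−f) = r1·f + r0·(1−f) holds, f1 ≥ f0, and RR_ED := (r1*·f1 + r0*·(1−f1)) / (r1·f0 + r0·(1−f0)) ≥ 1. Then f1/f0 ≥ RR_ED (with the convention that f0 > 0). -/
/-- Cornfield condition for the exposure-confounder relative risk under the
average null (Assumption 1), binary confounder. -/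
theorem cornfield_RR_EU
    (pe f f1 f0 r1s r0s r1 r0 RR_ED : ℝ)
    (hpe : pe ∈ Set.Icc (0:ℝ) 1)
    (hf : f ∈ Set.Icc (0:ℝ) 1) (hf1 : f1 ∈ Set.Icc (0:ℝ) 1)
    (hf0 : f0 ∈ Set.Icc (0:ℝ) 1)
    (hr1s : r1s ∈ Set.Ioc (0:ℝ) 1) (hr0s : r0s ∈ Set.Ioc (0:ℝ) 1)
    (hr1 : r1 ∈ Set.Ioc (0:ℝ) 1) (hr0 : r0 ∈ Set.Ioc (0:ℝ) 1)
    (hmix : f = pe * f1 + (1 - pe) * f0)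
    (hnull : r1s * f + r0s * (1 - f) = r1 * f + r0 * (1 - f))
    (hmono : f1 ≥ f0) (hf0pos : f0 > 0)
    (hRR : RR_ED = (r1s * f1 + r0s * (1 - f1)) / (r1 * f0 + r0 * (1 - f0)))
    (hRR1 : RR_ED ≥ 1) :
    f1 / f0 ≥ RR_ED := by
  obtain ⟨hpe0, hpe1⟩ := hpe
  obtain ⟨hr1p, hr1u⟩ := hr1
  obtain ⟨hr0p, hr0u⟩ := hr0
  obtain ⟨hr1sp, hr1su⟩ := hr1s
  obtain ⟨hr0sp, hr0su⟩ := hr0s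
  obtain ⟨hf10, hf11⟩ := hf1
  obtain ⟨hf00, hf01⟩ := hf0
  -- f lies between f0 and f1
  have hff0 : f ≥ f0 := by nlinarith
  have hff1 : f ≤ f1 := by nlinarith
  have hfpos : f > 0 := lt_of_lt_of_le hf0pos hff0
  have hDpos : r1 * f0 + r0 * (1 - f0) > 0 := by nlinarith
  -- key polynomial inequality
  have key : f1 * (r1 * f0 + r0 * (1 - f0)) - f0 * (r1s * f1 + r0s * (1 - f1)) ≥ 0 := by
    have hmul : f * (f1 * (r1 * f0 + r0 * (1 - f0)) - f0 * (r1s * f1 + r0s * (1 - f1))) ≥ 0 := by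
      have hE : f0 * f1 * (r1s * f + r0s * (1 - f)) = f0 * f1 * (r1 * f + r0 * (1 - f)) := by
        rw [hnull]
      nlinarith [mul_nonneg (mul_nonneg hr0sp.le hf00) (sub_nonneg.mpr hff1),
        mul_nonneg (mul_nonneg hr0p.le hf10) (sub_nonneg.mpr hff0), hE]
    exact le_of_not_gt fun h => absurd hmul (not_le.mpr (mul_neg_of_pos_of_neg hfpos h))
  rw [hRR, ge_iff_le, div_le_div_iff₀ hDpos hf0pos]
  linarith [key]
end

section
/- Suppose RR_ED ≥ 1 and there exist real numbers U_E ≥ 1, U_D' ≥ 1 such that ((U_E·U_D')^{1/2} + 1)^2 / (U_E^{1/2} + U_D'^{1/2})^2 ≥ RR_ED. Then min(U_E, U_D') ≥ RR_ED. -/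
/-- Low-threshold generalized Cornfield condition for the relative risk:
the bound `(√(U_E·U_D') + 1)²/(√U_E + √U_D')² ≥ RR_ED` forces
`min(U_E, U_D') ≥ RR_ED`. -/
theorem cornfield_min_RR (RR_ED UE UD' : ℝ) (hRR : 1 ≤ RR_ED)
    (hUE : 1 ≤ UE) (hUD : 1 ≤ UD')
    (h : (Real.sqrt (UE * UD') + 1) ^ 2 / (Real.sqrt UE + Real.sqrt UD') ^ 2 ≥ RR_ED) :
    min UE UD' ≥ RR_ED := by
  have ha : 1 ≤ Real.sqrt UE := by
    rw [show (1:ℝ) = Real.sqrt 1 by simp]; exact Real.sqrt_le_sqrt hUE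
  have hb : 1 ≤ Real.sqrt UD' := by
    rw [show (1:ℝ) = Real.sqrt 1 by simp]; exact Real.sqrt_le_sqrt hUD
  have hs : Real.sqrt (UE * UD') = Real.sqrt UE * Real.sqrt UD' :=
    Real.sqrt_mul (by linarith) _
  set a := Real.sqrt UE with hadef
  set b := Real.sqrt UD' with hbdef
  have haE : a ^ 2 = UE := Real.sq_sqrt (by linarith)
  have hbD : b ^ 2 = UD' := Real.sq_sqrt (by linarith)
  have hpos : (0:ℝ) < (a + b) ^ 2 := by positivity
  rw [hs] at h
  have hkey : (a * b + 1) ^ 2 ≤ min UE UD' * (a + b) ^ 2 := by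
    rcases le_total UE UD' with hle | hle
    · rw [min_eq_left hle, ← haE]
      have hab : a ≤ b := Real.sqrt_le_sqrt hle
      nlinarith [mul_pos (by linarith : (0:ℝ) < a) (by linarith : (0:ℝ) < b)]
    · rw [min_eq_right hle, ← hbD]
      have hab : b ≤ a := Real.sqrt_le_sqrt hle
      nlinarith [mul_pos (by linarith : (0:ℝ) < a) (by linarith : (0:ℝ) < b)]
  calc RR_ED ≤ (a * b + 1) ^ 2 / (a + b) ^ 2 := h
    _ ≤ min UE UD' := by rw [div_le_iff₀ hpos]; exact hkey
end

section
/- Suppose RR_ED ≥ 1 and U_E ≥ 1, U_D' ≥ 1 satisfy ((U_E·U_D')^{1/2}+1)^2/(U_E^{1/2}+U_D'^{1/2})^2 ≥ RR_ED. Then max(U_E, U_D') ≥ (RR_ED^{1/2} + (RR_ED − 1)^{1/2})^2. -/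
set_option maxHeartbeats 1000000 in
/-- High-threshold generalized Cornfield condition for the relative risk:
the bound `(√(U_E·U_D') + 1)²/(√U_E + √U_D')² ≥ RR_ED` forces
`max(U_E, U_D') ≥ (√RR_ED + √(RR_ED − 1))²`. -/
theorem cornfield_max_RR (RR_ED UE UD' : ℝ) (hRR : 1 ≤ RR_ED)
    (hUE : 1 ≤ UE) (hUD : 1 ≤ UD')
    (h : (Real.sqrt (UE * UD') + 1) ^ 2 / (Real.sqrt UE + Real.sqrt UD') ^ 2 ≥ RR_ED) :
    max UE UD' ≥ (Real.sqrt RR_ED + Real.sqrt (RR_ED - 1)) ^ 2 := by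
  set x := Real.sqrt UE with hxdef
  set y := Real.sqrt UD' with hydef
  have hx1 : 1 ≤ x := by
    rw [hxdef, show (1:ℝ) = Real.sqrt 1 by simp]
    exact Real.sqrt_le_sqrt hUE
  have hy1 : 1 ≤ y := by
    rw [hydef, show (1:ℝ) = Real.sqrt 1 by simp]
    exact Real.sqrt_le_sqrt hUD
  have hxsq : x ^ 2 = UE := Real.sq_sqrt (by linarith)
  have hysq : y ^ 2 = UD' := Real.sq_sqrt (by linarith)
  have hxy : Real.sqrt (UE * UD') = x * y := Real.sqrt_mul (by linarith) _
  rw [hxy] at h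
  set m := max x y with hmdef
  have hm1 : 1 ≤ m := le_trans hx1 (le_max_left _ _)
  have hm0 : 0 < m := by linarith
  have hMm : max UE UD' = m ^ 2 := by
    rcases le_total x y with hle | hle
    · rw [hmdef, max_eq_right hle, max_eq_right (by nlinarith : UE ≤ UD'), hysq]
    · rw [hmdef, max_eq_left hle, max_eq_left (by nlinarith : UD' ≤ UE), hxsq]
  -- linear key inequality
  have hlin : 2 * m * (x * y + 1) ≤ (m ^ 2 + 1) * (x + y) := by
    rcases le_total x y with hle | hle
    · rw [hmdef, max_eq_right hle]
      nlinarith [mul_nonneg (by nlinarith : (0:ℝ) ≤ y ^ 2 - 1) (by linarith : (0:ℝ) ≤ y - x)]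
    · rw [hmdef, max_eq_left hle]
      nlinarith [mul_nonneg (by nlinarith : (0:ℝ) ≤ x ^ 2 - 1) (by linarith : (0:ℝ) ≤ x - y)]
  have hA0 : 0 ≤ 2 * m * (x * y + 1) := by
    have h1 : (0:ℝ) < x * y + 1 := by nlinarith
    nlinarith [mul_pos hm0 h1]
  have hsq : (2 * m * (x * y + 1)) ^ 2 ≤ ((m ^ 2 + 1) * (x + y)) ^ 2 := by
    nlinarith [hlin, hA0]
  have hxy0 : (0:ℝ) < (x + y) ^ 2 := by positivity
  have hm20 : (0:ℝ) < (2 * m) ^ 2 := by positivity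
  have key : (x * y + 1) ^ 2 / (x + y) ^ 2 ≤ (m ^ 2 + 1) ^ 2 / (2 * m) ^ 2 := by
    rw [div_le_div_iff₀ hxy0 hm20]
    nlinarith [hsq]
  have hRRle : RR_ED ≤ (m ^ 2 + 1) ^ 2 / (2 * m) ^ 2 := le_trans h key
  have hq : RR_ED * (2 * m) ^ 2 ≤ (m ^ 2 + 1) ^ 2 := (le_div_iff₀ hm20).mp hRRle
  have hq2 : (RR_ED - 1) * (2 * m) ^ 2 ≤ (m ^ 2 - 1) ^ 2 := by nlinarith
  have h1 : Real.sqrt RR_ED ≤ (m ^ 2 + 1) / (2 * m) := by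
    have : RR_ED ≤ ((m ^ 2 + 1) / (2 * m)) ^ 2 := by
      rw [div_pow]; exact (le_div_iff₀ hm20).mpr hq
    calc Real.sqrt RR_ED ≤ Real.sqrt (((m ^ 2 + 1) / (2 * m)) ^ 2) :=
          Real.sqrt_le_sqrt this
      _ = (m ^ 2 + 1) / (2 * m) := Real.sqrt_sq (by positivity)
  have h2 : Real.sqrt (RR_ED - 1) ≤ (m ^ 2 - 1) / (2 * m) := by
    have : RR_ED - 1 ≤ ((m ^ 2 - 1) / (2 * m)) ^ 2 := by
      rw [div_pow]; exact (le_div_iff₀ hm20).mpr hq2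
    calc Real.sqrt (RR_ED - 1) ≤ Real.sqrt (((m ^ 2 - 1) / (2 * m)) ^ 2) :=
          Real.sqrt_le_sqrt this
      _ = (m ^ 2 - 1) / (2 * m) := Real.sqrt_sq (div_nonneg (by nlinarith) (by linarith))
  have hsum : Real.sqrt RR_ED + Real.sqrt (RR_ED - 1) ≤ m := by
    have : (m ^ 2 + 1) / (2 * m) + (m ^ 2 - 1) / (2 * m) = m := by
      field_simp; ring
    linarith [h1, h2]
  have hnn : 0 ≤ Real.sqrt RR_ED + Real.sqrt (RR_ED - 1) :=
    add_nonneg (Real.sqrt_nonneg _) (Real.sqrt_nonneg _)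
  rw [hMm]
  calc (Real.sqrt RR_ED + Real.sqrt (RR_ED - 1)) ^ 2 ≤ m ^ 2 :=
        pow_le_pow_left₀ hnn hsum 2
end

section
/- Let E, D be Bernoulli random variables and U a random variable with values in {0,...,K−1} on a finite probability space with pr(E=1)∈(0,1) and all conditional probabilities well-defined. If the average null holds, i.e., Σ_k [pr(D=1|E=1,U=k) − pr(D=1|E=0,U=k)]·pr(U=k) = 0, then pr(D=1|E=1) − pr(D=1|E=0) = Σ_{k=1}^{K−1} α_k · (β_{1k}·pr(E=0) + β_{0k}·pr(E=1)), where α_k = pr(U=k|E=1) − pr(U=k|E=0), β_{1k} = pr(D=1|E=1,U=k) − pr(D=1|E=1,U=0), β_{0k} = pr(D=1|E=0,U=k) − pr(D=1|E=0,U=0). -/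
lemma rd_aux (K : ℕ) (hK : 1 ≤ K) (a b c d : ℕ → ℝ)
    (hb : ∀ k ∈ Finset.range K, b k ≠ 0) (hd : ∀ k ∈ Finset.range K, d k ≠ 0)
    (B D : ℝ) (hB : B = ∑ k ∈ Finset.range K, b k)
    (hDd : D = ∑ k ∈ Finset.range K, d k)
    (hBne : B ≠ 0) (hDne : D ≠ 0) (hBD : B + D = 1)
    (hnull : ∑ k ∈ Finset.range K,
        (a k / b k - c k / d k) * (b k + d k) = 0) :
    (∑ k ∈ Finset.range K, a k) / B - (∑ k ∈ Finset.range K, c k) / D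
    = ∑ k ∈ Finset.Icc 1 (K - 1),
        (b k / B - d k / D)
        * ((a k / b k - a 0 / b 0) * D + (c k / d k - c 0 / d 0) * B) := by
  have h0 : 0 ∈ Finset.range K := Finset.mem_range.mpr hK
  have hb0 := hb 0 h0
  have hd0 := hd 0 h0
  set C : ℝ := (a 0 / b 0) * D + (c 0 / d 0) * B with hC
  have key : ∀ k ∈ Finset.range K,
      (b k / B - d k / D)
        * ((a k / b k - a 0 / b 0) * D + (c k / d k - c 0 / d 0) * B)
      = a k / B - c k / D - (a k / b k - c k / d k) * (b k + d k)
        - C * (b k / B - d k / D) := by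
    intro k hk
    have hbk := hb k hk
    have hdk := hd k hk
    have hD' : D = 1 - B := by linarith
    rw [hC, hD']
    rw [hD'] at hDne
    field_simp
    ring
  have expand : ∑ k ∈ Finset.range K,
      (b k / B - d k / D)
        * ((a k / b k - a 0 / b 0) * D + (c k / d k - c 0 / d 0) * B)
      = (∑ k ∈ Finset.range K, a k) / B - (∑ k ∈ Finset.range K, c k) / D := by
    rw [Finset.sum_congr rfl key]
    simp only [Finset.sum_sub_distrib, ← Finset.sum_div, ← Finset.mul_sum, hnull]
    rw [← hB, ← hDd, div_self hBne, div_self hDne]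
    ring
  have hIcc : Finset.Icc 1 (K - 1) = Finset.Ico 1 K := by
    rw [← Finset.Ico_add_one_right_eq_Icc]
    congr 1
    omega
  have hsplit : ∑ k ∈ Finset.range K,
      (b k / B - d k / D)
        * ((a k / b k - a 0 / b 0) * D + (c k / d k - c 0 / d 0) * B)
      = ∑ k ∈ Finset.Ico 1 K,
      (b k / B - d k / D)
        * ((a k / b k - a 0 / b 0) * D + (c k / d k - c 0 / d 0) * B) := by
    rw [Finset.range_eq_Ico, Finset.sum_eq_sum_Ico_succ_bot hK]
    simp
  rw [hIcc, ← hsplit, expand]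

/-- Lemma 1: decomposition of the observed risk difference under the average
null (Assumption 1).  The finite probability space is encoded by the joint
probability mass function `p e d k = pr(E = e, D = d, U = k)` with `e, d`
Booleans (`true` = 1) and `k ∈ {0, …, K−1}`.  Well-definedness of all the
conditional probabilities is encoded by positivity of `pr(E = e, U = k)` and
`pr(E = 1) ∈ (0,1)`. -/
theorem risk_difference_decomposition
    (K : ℕ) (hK : 1 ≤ K) (p : Bool → Bool → ℕ → ℝ)
    (hnn : ∀ e d : Bool, ∀ k ∈ Finset.range K, 0 ≤ p e d k)
    (htotal : ∑ k ∈ Finset.range K, (p true true k + p true false k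
        + p false true k + p false false k) = 1)
    (hEU : ∀ e : Bool, ∀ k ∈ Finset.range K, 0 < p e true k + p e false k)
    (hE1 : 0 < ∑ k ∈ Finset.range K, (p true true k + p true false k))
    (hE1' : ∑ k ∈ Finset.range K, (p true true k + p true false k) < 1)
    -- Assumption 1: the average causal effect of E on D is zero.
    (hnull : ∑ k ∈ Finset.range K,
        (p true true k / (p true true k + p true false k)
          - p false true k / (p false true k + p false false k))
        * (p true true k + p true false k + p false true k + p false false k) = 0) :
    -- pr(D=1|E=1) − pr(D=1|E=0)
    (∑ k ∈ Finset.range K, p true true k)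
        / (∑ k ∈ Finset.range K, (p true true k + p true false k))
      - (∑ k ∈ Finset.range K, p false true k)
        / (∑ k ∈ Finset.range K, (p false true k + p false false k))
    = ∑ k ∈ Finset.Icc 1 (K - 1),
        -- α_k = pr(U=k|E=1) − pr(U=k|E=0)
        ((p true true k + p true false k)
            / (∑ j ∈ Finset.range K, (p true true j + p true false j))
          - (p false true k + p false false k)
            / (∑ j ∈ Finset.range K, (p false true j + p false false j)))
        -- β_{1k}·pr(E=0) + β_{0k}·pr(E=1)
        * ((p true true k / (p true true k + p true false k)
              - p true true 0 / (p true true 0 + p true false 0))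
            * (∑ j ∈ Finset.range K, (p false true j + p false false j))
          + (p false true k / (p false true k + p false false k)
              - p false true 0 / (p false true 0 + p false false 0))
            * (∑ j ∈ Finset.range K, (p true true j + p true false j))) := by
  have hBD : (∑ k ∈ Finset.range K, (p true true k + p true false k))
      + (∑ k ∈ Finset.range K, (p false true k + p false false k)) = 1 := by
    rw [← Finset.sum_add_distrib, ← htotal]
    exact Finset.sum_congr rfl fun k _ => by ring
  have hnull' : ∑ k ∈ Finset.range K,
      (p true true k / (p true true k + p true false k)
        - p false true k / (p false true k + p false false k))
      * ((p true true k + p true false k) + (p false true k + p false false k)) = 0 := by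
    rw [← hnull]
    exact Finset.sum_congr rfl fun k _ => by ring
  exact rd_aux K hK (fun k => p true true k) (fun k => p true true k + p true false k)
    (fun k => p false true k) (fun k => p false true k + p false false k)
    (fun k hk => ne_of_gt (hEU true k hk)) (fun k hk => ne_of_gt (hEU false k hk))
    _ _ rfl rfl (ne_of_gt hE1) (by linarith : (∑ k ∈ Finset.range K, (p false true k + p false false k)) ≠ 0) hBD hnull'
end

section
/- Under the same setup as Theorem 1 (binary U, Assumption 1 decomposition, RD_ED ≥ 0, RD_EU ≥ 0), max(RD_EU, max(RD_{UD|E=1}, RD_{UD|E=0})) ≥ RD_ED^{1/2}. -/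
/-- Theorem 1, second conclusion: the square-root Cornfield bound for the
risk difference with a binary confounder. -/
theorem cornfield_RD_sqrt
    (RD_ED RD_EU x1 x0 w : ℝ)
    (hw : w ∈ Set.Icc (0:ℝ) 1)
    (hED : RD_ED ∈ Set.Icc (-1:ℝ) 1) (hEU : RD_EU ∈ Set.Icc (-1:ℝ) 1)
    (hx1 : x1 ∈ Set.Icc (-1:ℝ) 1) (hx0 : x0 ∈ Set.Icc (-1:ℝ) 1)
    (hdecomp : RD_ED = RD_EU * (x1 * (1 - w) + x0 * w))
    (hED0 : 0 ≤ RD_ED) (hEU0 : 0 ≤ RD_EU) :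
    max RD_EU (max x1 x0) ≥ Real.sqrt RD_ED := by
  set M := max RD_EU (max x1 x0) with hM
  have hMEU : RD_EU ≤ M := le_max_left _ _
  have hMx1 : x1 ≤ M := le_trans (le_max_left _ _) (le_max_right _ _)
  have hMx0 : x0 ≤ M := le_trans (le_max_right _ _) (le_max_right _ _)
  have hM0 : 0 ≤ M := le_trans hEU0 hMEU
  have hc : x1 * (1 - w) + x0 * w ≤ max x1 x0 := by
    have h1 : x1 ≤ max x1 x0 := le_max_left _ _
    have h0 : x0 ≤ max x1 x0 := le_max_right _ _
    nlinarith [hw.1, hw.2]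
  have hle : RD_ED ≤ M * M := by
    rcases le_or_gt (max x1 x0) 0 with h | h
    · have : RD_ED ≤ 0 := by
        rw [hdecomp]
        exact mul_nonpos_of_nonneg_of_nonpos hEU0 (le_trans hc h)
      nlinarith
    · have h1 : RD_ED ≤ RD_EU * max x1 x0 := by
        rw [hdecomp]; exact mul_le_mul_of_nonneg_left hc hEU0
      have h2 : RD_EU * max x1 x0 ≤ M * M :=
        mul_le_mul hMEU (le_max_right _ _) (le_of_lt h) hM0
      linarith
  calc Real.sqrt RD_ED ≤ Real.sqrt (M * M) := Real.sqrt_le_sqrt hle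
    _ = M := Real.sqrt_mul_self hM0
end

section
/- Let a ∈ [0,1], x,y ∈ [−1,1], w ∈ [0,1], and R = a·(x(1−w)+y·w) with R ≥ 0. Then max(a, max(x,y)) ≥ √R. Moreover the bound is sharp: for any R ∈ [0,1] there exist a, x, y, w with a = x = y = √R achieving equality. -/
/-- Sharpness of the square-root Cornfield bound for a binary confounder:
the bound `max(a, max(x,y)) ≥ √R` always holds, and for every `R ∈ [0,1]` it
is attained with `a = x = y = √R`. -/
theorem cornfield_sqrt_sharp :
    (∀ a x y w R : ℝ, a ∈ Set.Icc (0:ℝ) 1 → x ∈ Set.Icc (-1:ℝ) 1 →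
      y ∈ Set.Icc (-1:ℝ) 1 → w ∈ Set.Icc (0:ℝ) 1 →
      R = a * (x * (1 - w) + y * w) → 0 ≤ R →
      max a (max x y) ≥ Real.sqrt R) ∧
    (∀ R : ℝ, R ∈ Set.Icc (0:ℝ) 1 →
      ∃ a x y w : ℝ, a ∈ Set.Icc (0:ℝ) 1 ∧ x ∈ Set.Icc (-1:ℝ) 1 ∧
        y ∈ Set.Icc (-1:ℝ) 1 ∧ w ∈ Set.Icc (0:ℝ) 1 ∧
        a = Real.sqrt R ∧ x = Real.sqrt R ∧ y = Real.sqrt R ∧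
        R = a * (x * (1 - w) + y * w) ∧
        max a (max x y) = Real.sqrt R) := by
  constructor
  · rintro a x y w R ⟨ha0, ha1⟩ ⟨hx0, hx1⟩ ⟨hy0, hy1⟩ ⟨hw0, hw1⟩ hR hR0
    set m := max a (max x y) with hm
    have hm0 : 0 ≤ m := le_trans ha0 (le_max_left _ _)
    have hxm : x ≤ m := le_trans (le_max_left x y) (le_max_right _ _)
    have hym : y ≤ m := le_trans (le_max_right x y) (le_max_right _ _)
    have ham : a ≤ m := le_max_left _ _
    have hconv : x * (1 - w) + y * w ≤ m := by nlinarith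
    have hRm : R ≤ m * m := by
      rcases le_or_gt (x * (1 - w) + y * w) 0 with h | h
      · nlinarith
      · nlinarith
    have := Real.sqrt_le_sqrt hRm
    calc Real.sqrt R ≤ Real.sqrt (m * m) := this
      _ = m := by rw [Real.sqrt_mul_self hm0]
  · rintro R ⟨hR0, hR1⟩
    have hs0 : 0 ≤ Real.sqrt R := Real.sqrt_nonneg R
    have hs1 : Real.sqrt R ≤ 1 := by
      rw [show (1:ℝ) = Real.sqrt 1 by simp]; exact Real.sqrt_le_sqrt hR1
    refine ⟨Real.sqrt R, Real.sqrt R, Real.sqrt R, 0, ⟨hs0, hs1⟩,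
      ⟨by linarith, hs1⟩, ⟨by linarith, hs1⟩, ⟨le_refl 0, zero_le_one⟩,
      rfl, rfl, rfl, ?_, by simp⟩
    rw [mul_zero, sub_zero, mul_one, add_zero, Real.mul_self_sqrt hR0]
end

section
/- For K ≥ 3 and R ∈ [0,1] with (K−1)·R ≤ 4, there exist α_k ∈ [−1,1] with Σ_{k=1}^{K−1}|α_k| ≤ 2 and β_{1k} = β_{0k} = α_k = ±(R/(K−1))^{1/2} such that Σ_k α_k(β_{1k}(1−p)+β_{0k}p) = R and max(max_k|α_k|, max_k max(|β_{1k}|,|β_{0k}|)) = (R/(K−1))^{1/2}. -/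
/-- Sharpness of the bound `max(A,B) ≥ (R/(K−1))^{1/2}` in Theorem 2 when
`(K−1)·R ≤ 4`. -/
theorem cornfield_maxAB_sharp
    (K : ℕ) (hK : 3 ≤ K) (R p : ℝ) (hR : R ∈ Set.Icc (0:ℝ) 1)
    (hKR : ((K : ℝ) - 1) * R ≤ 4) (hp : p ∈ Set.Icc (0:ℝ) 1) :
    ∃ α β1 β0 : ℕ → ℝ,
      (∀ k ∈ Finset.Icc 1 (K - 1), α k ∈ Set.Icc (-1:ℝ) 1) ∧
      (∑ k ∈ Finset.Icc 1 (K - 1), |α k| ≤ 2) ∧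
      (∀ k ∈ Finset.Icc 1 (K - 1),
        β1 k = α k ∧ β0 k = α k ∧
        (α k = Real.sqrt (R / (K - 1)) ∨ α k = -Real.sqrt (R / (K - 1)))) ∧
      (∑ k ∈ Finset.Icc 1 (K - 1), α k * (β1 k * (1 - p) + β0 k * p)) = R ∧
      max ((Finset.Icc 1 (K - 1)).sup' (Finset.nonempty_Icc.mpr (by omega))
            (fun k => |α k|))
          ((Finset.Icc 1 (K - 1)).sup' (Finset.nonempty_Icc.mpr (by omega))
            (fun k => max |β1 k| |β0 k|))
        = Real.sqrt (R / (K - 1)) := by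
  obtain ⟨hR0, hR1⟩ := hR
  set s := Real.sqrt (R / (K - 1)) with hs
  have hK3 : (3:ℝ) ≤ (K:ℝ) := by exact_mod_cast hK
  have hKpos : (0:ℝ) < (K:ℝ) - 1 := by linarith
  have hdiv : 0 ≤ R / ((K:ℝ) - 1) := div_nonneg hR0 hKpos.le
  have hs0 : 0 ≤ s := Real.sqrt_nonneg _
  have hsq : s ^ 2 = R / ((K:ℝ) - 1) := Real.sq_sqrt hdiv
  have hcard : ((Finset.Icc 1 (K - 1)).card : ℝ) = (K:ℝ) - 1 := by
    rw [Nat.card_Icc]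
    have h1 : 1 ≤ K - 1 := by omega
    have : K - 1 + 1 - 1 = K - 1 := by omega
    rw [this]
    push_cast [Nat.cast_sub (by omega : 1 ≤ K)]
    ring
  have hs1 : s ≤ 1 := by
    have h : R / ((K:ℝ) - 1) ≤ 1 := (div_le_one hKpos).mpr (by linarith)
    nlinarith [hsq]
  refine ⟨fun _ => s, fun _ => s, fun _ => s, ?_, ?_, ?_, ?_, ?_⟩
  · intro k hk; exact ⟨by linarith, hs1⟩
  · rw [Finset.sum_const, nsmul_eq_mul, abs_of_nonneg hs0, hcard]
    have h2 : (((K:ℝ) - 1) * s) ^ 2 ≤ 2 ^ 2 := by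
      rw [mul_pow, hsq]
      have : ((K:ℝ) - 1) ^ 2 * (R / ((K:ℝ) - 1)) = ((K:ℝ) - 1) * R := by
        field_simp
      rw [this]; linarith
    nlinarith [mul_nonneg hKpos.le hs0]
  · intro k hk; exact ⟨rfl, rfl, Or.inl rfl⟩
  · have : s * (s * (1 - p) + s * p) = s ^ 2 := by ring
    rw [Finset.sum_const, nsmul_eq_mul, this, hsq, hcard]
    field_simp
  · rw [Finset.sup'_const, Finset.sup'_const, abs_of_nonneg hs0, max_self, max_self]
end

section
/- Let RR0 ≥ 1 and f1, f0 ∈ [0,1] with f1 ≥ f0 > 0. Then ((RR0 − 1)f1 + 1)/((RR0 − 1)f0 + 1) ≤ min(RR0, f1/f0). -/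
/-- Final step of Appendix A: `((RR0−1)f1+1)/((RR0−1)f0+1) ≤ min(RR0, f1/f0)`. -/
theorem cornfield_final_step
    (RR0 f1 f0 : ℝ) (hRR0 : 1 ≤ RR0)
    (hf1 : f1 ∈ Set.Icc (0:ℝ) 1) (hf0 : f0 ∈ Set.Icc (0:ℝ) 1)
    (h10 : f0 ≤ f1) (hf0pos : 0 < f0) :
    ((RR0 - 1) * f1 + 1) / ((RR0 - 1) * f0 + 1) ≤ min RR0 (f1 / f0) := by
  obtain ⟨hf10, hf11⟩ := hf1
  obtain ⟨hf00, hf01⟩ := hf0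
  have hden : 0 < (RR0 - 1) * f0 + 1 := by nlinarith
  refine le_min ?_ ?_
  · rw [div_le_iff₀ hden]; nlinarith [mul_nonneg (mul_nonneg (le_of_lt (lt_of_lt_of_le zero_lt_one hRR0)) (by linarith : (0:ℝ) ≤ RR0 - 1)) hf00, mul_nonneg (by linarith : (0:ℝ) ≤ RR0 - 1) (by linarith : (0:ℝ) ≤ 1 - f1)]
  · rw [div_le_div_iff₀ hden hf0pos]; nlinarith
end
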